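/- arXiv:1007.1738 — 4 statements merged into one kernel-verified Lean document; each statement's English description precedes it below -/
import Mathlib

section
/- Let X be a positive random variable and a > 0. The condition E[e^{-tX}] = O(t^{-a}) as t → ∞ holds if and only if P(X ≤ x) = O(x^a) as x → 0+. -/
open MeasureTheory Filter

/-!
Markov's inequality at level `e⁻¹` gives `e⁻¹ P(X ≤ x) ≤ E[e^{-X/x}]`, which is the forward
direction with `t = 1/x`. Conversely, by the layer-cake formula
`E[e^{-tX}] = ∫₀¹ P(e^{-tX} > s) ds`, and `P(e^{-tX} > s) ≤ P(X ≤ log(1/s)/t)`. Since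
`log(1/s) ≤ 2a s^{-1/(2a)}`, the bound `P(X ≤ x) ≤ C x^a` turns the integrand into
`C (2a)^a t^{-a} s^{-1/2}`, which is integrable on `(0, 1)`.
-/

open Real Set

lemma exists_le_mul_rpow_of_isBigO_nhdsGT {f : ℝ → ℝ} {a : ℝ} (ha : 0 ≤ a)
    (hf : ∀ x, f x ≤ 1) (h : f =O[nhdsWithin 0 (Ioi 0)] fun x => x ^ a) :
    ∃ C, ∀ x, 0 < x → f x ≤ C * x ^ a := by
  obtain ⟨c, hc⟩ := h.bound
  obtain ⟨δ, hδ : 0 < δ, hδc⟩ := mem_nhdsGT_iff_exists_Ioo_subset.mp hc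
  refine ⟨max c (δ ^ (-a)), fun x hx => ?_⟩
  have hxa : 0 ≤ x ^ a := rpow_nonneg hx.le a
  rcases lt_or_ge x δ with hxδ | hδx
  · have hfx : ‖f x‖ ≤ c * ‖x ^ a‖ := hδc ⟨hx, hxδ⟩
    rw [norm_of_nonneg hxa] at hfx
    calc f x ≤ c * x ^ a := (le_abs_self _).trans hfx
      _ ≤ max c (δ ^ (-a)) * x ^ a := by gcongr; exact le_max_left _ _
  · calc f x ≤ 1 := hf x
      _ ≤ (x / δ) ^ a := one_le_rpow ((one_le_div hδ).mpr hδx) ha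
      _ = δ ^ (-a) * x ^ a := by
        rw [div_rpow hx.le hδ.le, rpow_neg hδ.le]; ring
      _ ≤ max c (δ ^ (-a)) * x ^ a := by gcongr; exact le_max_right _ _

section Laplace

variable {Ω : Type*} [MeasurableSpace Ω] {μ : Measure Ω} {X : Ω → ℝ}

lemma integrable_exp_neg_mul [IsFiniteMeasure μ] (hX : Measurable X) (hX0 : ∀ ω, 0 ≤ X ω)
    {t : ℝ} (ht : 0 ≤ t) : Integrable (fun ω => exp (-t * X ω)) μ := by
  refine .of_bound (by fun_prop) 1 (ae_of_all _ fun ω => ?_)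
  rw [norm_of_nonneg (exp_pos _).le, exp_le_one_iff]
  nlinarith [hX0 ω]

lemma exp_neg_one_mul_measureReal_le_integral [IsFiniteMeasure μ] (hX : Measurable X)
    (hX0 : ∀ ω, 0 ≤ X ω) {x : ℝ} (hx : 0 < x) :
    exp (-1) * μ.real {ω | X ω ≤ x} ≤ ∫ ω, exp (-x⁻¹ * X ω) ∂μ := by
  have hset : {ω | X ω ≤ x} = {ω | exp (-1) ≤ exp (-x⁻¹ * X ω)} := by
    ext ω
    rw [mem_ofPred_eq, mem_ofPred_eq, exp_le_exp, neg_mul, neg_le_neg_iff, inv_mul_le_iff₀ hx,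
      mul_one]
  rw [hset]
  exact mul_meas_ge_le_integral_of_nonneg (ae_of_all _ fun _ => (exp_pos _).le)
    (integrable_exp_neg_mul hX hX0 (inv_pos.mpr hx).le) _

lemma measureReal_lt_exp_neg_mul_le [IsFiniteMeasure μ] {C a : ℝ}
    (hC : ∀ x, 0 < x → μ.real {ω | X ω ≤ x} ≤ C * x ^ a) (ha : 0 < a) {t s : ℝ}
    (ht : 0 < t) (hs : 0 < s) :
    μ.real {ω | s < exp (-t * X ω)} ≤ C * (2 * a) ^ a * t ^ (-a) * s ^ (-(1 / 2 : ℝ)) := by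
  set x := 2 * a * s ^ (-(2 * a)⁻¹) / t with hx_def
  have hx : 0 < x := by positivity
  have hxa : x ^ a = (2 * a) ^ a * t ^ (-a) * s ^ (-(1 / 2 : ℝ)) := by
    rw [hx_def, div_eq_mul_inv, mul_rpow (by positivity) (by positivity),
      mul_rpow (by positivity) (by positivity), ← rpow_mul hs.le, inv_rpow ht.le,
      ← rpow_neg ht.le]
    field_simp
  have hsub : {ω | s < exp (-t * X ω)} ⊆ {ω | X ω ≤ x} := by
    intro ω hω
    have hlog : log s < -t * X ω := by rwa [← exp_lt_exp, exp_log hs]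
    have hε := log_le_rpow_div (inv_pos.mpr hs).le (inv_pos.mpr (mul_pos two_pos ha))
    rw [log_inv, inv_rpow hs.le, ← rpow_neg hs.le, div_inv_eq_mul] at hε
    show X ω ≤ x
    rw [le_div_iff₀ ht]
    linarith
  calc μ.real {ω | s < exp (-t * X ω)} ≤ μ.real {ω | X ω ≤ x} := measureReal_mono hsub
    _ ≤ C * x ^ a := hC x hx
    _ = C * (2 * a) ^ a * t ^ (-a) * s ^ (-(1 / 2 : ℝ)) := by rw [hxa]; ring

lemma integral_exp_neg_mul_le [IsFiniteMeasure μ] (hX : Measurable X) (hX0 : ∀ ω, 0 ≤ X ω)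
    {C a : ℝ} (hC : ∀ x, 0 < x → μ.real {ω | X ω ≤ x} ≤ C * x ^ a) (ha : 0 < a) {t : ℝ}
    (ht : 0 < t) :
    ∫ ω, exp (-t * X ω) ∂μ ≤ 2 * C * (2 * a) ^ a * t ^ (-a) := by
  set K := C * (2 * a) ^ a * t ^ (-a)
  set g : ℝ → ℝ := (Ioc 0 1).indicator fun s => K * s ^ (-(1 / 2 : ℝ)) with hg_def
  have hg : IntegrableOn g (Ioi 0) := by
    refine (IntegrableOn.integrable_indicator ?_ measurableSet_Ioc).integrableOn
    exact ((intervalIntegrable_iff_integrableOn_Ioc_of_le zero_le_one).mp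
      (intervalIntegral.intervalIntegrable_rpow' (r := -(1 / 2)) (by norm_num))).const_mul K
  have hbound : ∀ s ∈ Ioi (0 : ℝ), μ.real {ω | s < exp (-t * X ω)} ≤ g s := by
    intro s hs
    rcases le_or_gt s 1 with hs1 | hs1
    · rw [hg_def, indicator_of_mem (show s ∈ Ioc 0 1 from ⟨hs, hs1⟩)]
      exact measureReal_lt_exp_neg_mul_le hC ha ht hs
    · have hempty : {ω | s < exp (-t * X ω)} = ∅ := by
        ext ω
        simp only [mem_ofPred_eq, mem_empty_iff_false, iff_false, not_lt]
        refine le_trans ?_ hs1.le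
        rw [exp_le_one_iff]
        nlinarith [hX0 ω]
      rw [hempty, measureReal_empty, hg_def,
        indicator_of_notMem fun h : s ∈ Ioc 0 1 => hs1.not_ge h.2]
  calc ∫ ω, exp (-t * X ω) ∂μ = ∫ s in Ioi 0, μ.real {ω | s < exp (-t * X ω)} :=
        (integrable_exp_neg_mul hX hX0 ht.le).integral_eq_integral_meas_lt
          (ae_of_all _ fun _ => (exp_pos _).le)
    _ ≤ ∫ s in Ioi 0, g s :=
        integral_mono_of_nonneg (ae_of_all _ fun _ => measureReal_nonneg) hg
          ((ae_restrict_iff' measurableSet_Ioi).mpr (ae_of_all _ hbound))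
    _ = K * ∫ s in (0 : ℝ)..1, s ^ (-(1 / 2 : ℝ)) := by
      rw [setIntegral_indicator measurableSet_Ioc,
        inter_eq_self_of_subset_right Ioc_subset_Ioi_self,
        intervalIntegral.integral_of_le zero_le_one, integral_const_mul]
    _ = 2 * K := by
      rw [integral_rpow (by norm_num)]
      norm_num
      ring
    _ = 2 * C * (2 * a) ^ a * t ^ (-a) := by ring

end Laplace

/-- For a positive random variable `X` and `a > 0`:
`E[e^{-tX}] = O(t^{-a})` as `t → ∞` iff `P(X ≤ x) = O(x^a)` as `x → 0+`. -/
theorem stmt_1 {Ω : Type*} [MeasurableSpace Ω] (μ : Measure Ω) [IsProbabilityMeasure μ]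
    (X : Ω → ℝ) (hXmeas : Measurable X) (hXpos : ∀ ω, 0 < X ω)
    (a : ℝ) (ha : 0 < a) :
    ((fun t : ℝ => ∫ ω, Real.exp (-t * X ω) ∂μ) =O[atTop] fun t : ℝ => t ^ (-a)) ↔
      ((fun x : ℝ => (μ {ω | X ω ≤ x}).toReal) =O[nhdsWithin 0 (Set.Ioi 0)]
        fun x : ℝ => x ^ a) := by
  have hX0 : ∀ ω, 0 ≤ X ω := fun ω => (hXpos ω).le
  constructor
  · intro h
    have hmarkov : (fun x : ℝ => μ.real {ω | X ω ≤ x}) =O[nhdsWithin 0 (Ioi 0)]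
        fun x => ∫ ω, exp (-x⁻¹ * X ω) ∂μ := by
      refine .of_bound (exp 1) (eventually_mem_nhdsWithin.mono fun x hx => ?_)
      have hle := exp_neg_one_mul_measureReal_le_integral (μ := μ) hXmeas hX0 hx
      rw [exp_neg, inv_mul_le_iff₀ (exp_pos 1)] at hle
      rwa [norm_of_nonneg measureReal_nonneg,
        norm_of_nonneg (integral_nonneg fun _ => (exp_pos _).le)]
    refine (hmarkov.trans (h.comp_tendsto tendsto_inv_nhdsGT_zero)).congr' .rfl ?_
    filter_upwards [self_mem_nhdsWithin] with x hx
    simp only [Function.comp, rpow_neg (inv_pos.mpr hx).le, inv_rpow (le_of_lt hx), inv_inv]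
  · intro h
    obtain ⟨C, hC⟩ := exists_le_mul_rpow_of_isBigO_nhdsGT ha.le (fun _ => measureReal_le_one) h
    refine .of_bound (2 * C * (2 * a) ^ a) ((eventually_gt_atTop 0).mono fun t ht => ?_)
    rw [norm_of_nonneg (integral_nonneg fun _ => (exp_pos _).le),
      norm_of_nonneg (rpow_nonneg ht.le _)]
    exact integral_exp_neg_mul_le hXmeas hX0 hC ha ht
end

section
/- Let φ : ℝ₊ → ℝ₊ be a bounded function and A a positive random variable such that for some p ∈ (0,1), t₀ ≥ 0, and all t > t₀, φ(t) ≤ p·E[φ(A t)]. If p·E[A^{-a}] < 1 for some a ∈ (0,∞), then φ(t) = O(t^{-a}) as t → ∞. -/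
/-!
Put `I = E[A^{-a}]` and `C = p M t₀^a I / (1 - p I)`, where `M` bounds `φ`. By induction on `n`,
`φ t ≤ C t^{-a} + pⁿ M` for all `t > t₀`: inside the expectation, either `A t > t₀` and the
induction hypothesis applies, or `A t ≤ t₀` and `φ (A t) ≤ M ≤ M t₀^a (A t)^{-a}`. The choice of
`C` makes the constant reproduce itself, and letting `n → ∞` gives `φ t ≤ C t^{-a}`.
-/

open MeasureTheory Filter

lemma Real.one_le_rpow_mul_rpow_neg {s t a : ℝ} (hs : 0 < s) (hst : s ≤ t) (ha : 0 ≤ a) :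
    1 ≤ t ^ a * s ^ (-a) := by
  rw [Real.rpow_neg hs.le, ← div_eq_mul_inv, one_le_div (Real.rpow_pos_of_pos hs a)]
  exact Real.rpow_le_rpow hs.le hst ha

section TailBound

variable {t₀ a M C ε : ℝ} {φ : ℝ → ℝ}

lemma le_mul_rpow_neg_add_of_forall_gt (ht₀ : 0 ≤ t₀) (ha : 0 ≤ a)
    (hM : ∀ s, 0 ≤ s → φ s ≤ M) (hM0 : 0 ≤ M) (hC : 0 ≤ C) (hε : 0 ≤ ε)
    (hbound : ∀ s, t₀ < s → φ s ≤ C * s ^ (-a) + ε) {s : ℝ} (hs : 0 < s) :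
    φ s ≤ (M * t₀ ^ a + C) * s ^ (-a) + ε := by
  have hsa : 0 ≤ s ^ (-a) := Real.rpow_nonneg hs.le _
  rcases le_or_gt s t₀ with hst | hst
  · have h1 := Real.one_le_rpow_mul_rpow_neg hs hst ha
    nlinarith [hM s hs.le, mul_nonneg hC hsa]
  · nlinarith [hbound s hst, mul_nonneg (mul_nonneg hM0 (Real.rpow_nonneg ht₀ a)) hsa]

variable {Ω : Type*} [MeasurableSpace Ω] {μ : Measure Ω} [IsProbabilityMeasure μ]
  {A : Ω → ℝ} {p : ℝ}

lemma tail_bound_step (hApos : ∀ ω, 0 < A ω) (hφnonneg : ∀ t, 0 ≤ t → 0 ≤ φ t)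
    (hM : ∀ t, 0 ≤ t → φ t ≤ M) (hp0 : 0 ≤ p) (ht₀ : 0 ≤ t₀)
    (hrec : ∀ t, t₀ < t → φ t ≤ p * ∫ ω, φ (A ω * t) ∂μ) (ha : 0 ≤ a)
    (hint : Integrable (fun ω => A ω ^ (-a)) μ) (hC : 0 ≤ C)
    (hCfix : p * (M * t₀ ^ a + C) * ∫ ω, A ω ^ (-a) ∂μ ≤ C) (hε : 0 ≤ ε)
    (hbound : ∀ t, t₀ < t → φ t ≤ C * t ^ (-a) + ε) :
    ∀ t, t₀ < t → φ t ≤ C * t ^ (-a) + p * ε := by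
  intro t ht
  have ht0 : 0 < t := ht₀.trans_lt ht
  have hM0 : 0 ≤ M := (hφnonneg 0 le_rfl).trans (hM 0 le_rfl)
  set D := M * t₀ ^ a + C
  have hpointwise : ∀ ω, φ (A ω * t) ≤ D * t ^ (-a) * A ω ^ (-a) + ε := fun ω => by
    have h := le_mul_rpow_neg_add_of_forall_gt ht₀ ha hM hM0 hC hε hbound
      (mul_pos (hApos ω) ht0)
    rw [Real.mul_rpow (hApos ω).le ht0.le] at h
    exact h.trans_eq (by ring)
  have hintegral : ∫ ω, φ (A ω * t) ∂μ ≤ D * t ^ (-a) * (∫ ω, A ω ^ (-a) ∂μ) + ε :=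
    calc ∫ ω, φ (A ω * t) ∂μ
        ≤ ∫ ω, (D * t ^ (-a) * A ω ^ (-a) + ε) ∂μ :=
          integral_mono_of_nonneg
            (Eventually.of_forall fun ω => hφnonneg _ (mul_pos (hApos ω) ht0).le)
            ((hint.const_mul _).add (integrable_const ε)) (Eventually.of_forall hpointwise)
      _ = D * t ^ (-a) * (∫ ω, A ω ^ (-a) ∂μ) + ε := by
          rw [integral_add (hint.const_mul _) (integrable_const ε), integral_const_mul,
            integral_const, probReal_univ, one_smul]
  have hta : 0 ≤ t ^ (-a) := Real.rpow_nonneg ht0.le _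
  calc φ t ≤ p * ∫ ω, φ (A ω * t) ∂μ := hrec t ht
    _ ≤ p * (D * t ^ (-a) * (∫ ω, A ω ^ (-a) ∂μ) + ε) := mul_le_mul_of_nonneg_left hintegral hp0
    _ = p * D * (∫ ω, A ω ^ (-a) ∂μ) * t ^ (-a) + p * ε := by ring
    _ ≤ C * t ^ (-a) + p * ε := by gcongr

lemma le_mul_rpow_neg_of_contraction (hApos : ∀ ω, 0 < A ω)
    (hφnonneg : ∀ t, 0 ≤ t → 0 ≤ φ t) (hM : ∀ t, 0 ≤ t → φ t ≤ M) (hp0 : 0 ≤ p) (hp1 : p < 1)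
    (ht₀ : 0 ≤ t₀) (hrec : ∀ t, t₀ < t → φ t ≤ p * ∫ ω, φ (A ω * t) ∂μ) (ha : 0 ≤ a)
    (hint : Integrable (fun ω => A ω ^ (-a)) μ) (hC : 0 ≤ C)
    (hCfix : p * (M * t₀ ^ a + C) * ∫ ω, A ω ^ (-a) ∂μ ≤ C) :
    ∀ t, t₀ < t → φ t ≤ C * t ^ (-a) := by
  have hM0 : 0 ≤ M := (hφnonneg 0 le_rfl).trans (hM 0 le_rfl)
  have hiterate : ∀ n : ℕ, ∀ t, t₀ < t → φ t ≤ C * t ^ (-a) + p ^ n * M := by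
    intro n
    induction n with
    | zero =>
      intro t ht
      have := mul_nonneg hC (Real.rpow_nonneg (ht₀.trans ht.le) (-a))
      linarith [hM t (ht₀.trans ht.le)]
    | succ n ih =>
      simpa only [pow_succ', mul_assoc] using tail_bound_step hApos hφnonneg hM hp0 ht₀ hrec ha
        hint hC hCfix (mul_nonneg (pow_nonneg hp0 n) hM0) ih
  intro t ht
  have hlim : Tendsto (fun n : ℕ => C * t ^ (-a) + p ^ n * M) atTop (nhds (C * t ^ (-a))) := by
    simpa using tendsto_const_nhds.add
      ((tendsto_pow_atTop_nhds_zero_of_lt_one hp0 hp1).mul_const M)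
  exact ge_of_tendsto' hlim fun n => hiterate n t ht

end TailBound

theorem stmt_5_general {Ω : Type*} [MeasurableSpace Ω] (μ : Measure Ω) [IsProbabilityMeasure μ]
    (A : Ω → ℝ) (hApos : ∀ ω, 0 < A ω)
    (φ : ℝ → ℝ)
    (hφnonneg : ∀ t : ℝ, 0 ≤ t → 0 ≤ φ t)
    (hφbdd : ∃ M : ℝ, ∀ t : ℝ, 0 ≤ t → φ t ≤ M)
    (p t₀ : ℝ) (hp0 : 0 < p) (hp1 : p < 1) (ht₀ : 0 ≤ t₀)
    (hrec : ∀ t : ℝ, t₀ < t → φ t ≤ p * ∫ ω, φ (A ω * t) ∂μ)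
    (a : ℝ) (ha : 0 < a)
    (hint : Integrable (fun ω => (A ω) ^ (-a)) μ)
    (hcontract : p * ∫ ω, (A ω) ^ (-a) ∂μ < 1) :
    (fun t : ℝ => φ t) =O[atTop] fun t : ℝ => t ^ (-a) := by
  obtain ⟨M, hM⟩ := hφbdd
  set I := ∫ ω, A ω ^ (-a) ∂μ
  have hI : 0 ≤ I := integral_nonneg fun ω => Real.rpow_nonneg (hApos ω).le _
  have hM0 : 0 ≤ M := (hφnonneg 0 le_rfl).trans (hM 0 le_rfl)
  have hgap : 0 < 1 - p * I := by linarith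
  set C := p * M * t₀ ^ a * I / (1 - p * I)
  have hC : 0 ≤ C := by positivity
  have hCfix : p * (M * t₀ ^ a + C) * I ≤ C := by
    have : C * (1 - p * I) = p * M * t₀ ^ a * I := div_mul_cancel₀ _ hgap.ne'
    linarith
  have hbound := le_mul_rpow_neg_of_contraction hApos hφnonneg hM hp0.le hp1 ht₀ hrec ha.le hint
    hC hCfix
  refine Asymptotics.IsBigO.of_bound C ?_
  filter_upwards [eventually_gt_atTop t₀] with t ht
  have ht0 : 0 < t := ht₀.trans_lt ht
  rw [Real.norm_of_nonneg (hφnonneg t ht0.le), Real.norm_of_nonneg (Real.rpow_nonneg ht0.le _)]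
  exact hbound t ht

/-- Liu's lemma: if `φ : ℝ₊ → ℝ₊` is bounded, `A > 0` is a random variable, and for
some `p ∈ (0,1)`, `t₀ ≥ 0` and all `t > t₀` we have `φ(t) ≤ p E[φ(A t)]`, then
`p E[A^{-a}] < 1` for some `a > 0` implies `φ(t) = O(t^{-a})` as `t → ∞`. -/
theorem stmt_5 {Ω : Type*} [MeasurableSpace Ω] (μ : Measure Ω) [IsProbabilityMeasure μ]
    (A : Ω → ℝ) (hAmeas : Measurable A) (hApos : ∀ ω, 0 < A ω)
    (φ : ℝ → ℝ) (hφmeas : Measurable φ)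
    (hφnonneg : ∀ t : ℝ, 0 ≤ t → 0 ≤ φ t)
    (hφbdd : ∃ M : ℝ, ∀ t : ℝ, 0 ≤ t → φ t ≤ M)
    (p t₀ : ℝ) (hp0 : 0 < p) (hp1 : p < 1) (ht₀ : 0 ≤ t₀)
    (hrec : ∀ t : ℝ, t₀ < t → φ t ≤ p * ∫ ω, φ (A ω * t) ∂μ)
    (a : ℝ) (ha : 0 < a)
    (hint : Integrable (fun ω => (A ω) ^ (-a)) μ)
    (hcontract : p * ∫ ω, (A ω) ^ (-a) ∂μ < 1) :
    (fun t : ℝ => φ t) =O[atTop] fun t : ℝ => t ^ (-a) :=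
  stmt_5_general μ A hApos φ hφnonneg hφbdd p t₀ hp0 hp1 ht₀ hrec a ha hint hcontract
end

section
/- Let (Xₙ) be real random variables, aₙ positive with aₙ/n → 0 and aₙ/√n → ∞, σ > 0, and suppose (n/aₙ²) log P((Xₙ - nμ)/aₙ ≤ -x-ε) → -(x+ε)²/(2σ²) for all x, ε > 0. If (Wₙ) are positive random variables with sup_n E[Wₙ] ≤ 1, then for all x > 0, liminf (n/aₙ²) log P((Xₙ + log Wₙ - nμ)/aₙ ≤ -x) ≥ -x²/(2σ²). -/
open MeasureTheory Filter Topology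

/-!
Fix `ε > 0` and write `uₙ = P((Xₙ - nμ)/aₙ ≤ -x-ε)`, `pₙ = P((Xₙ + log Wₙ - nμ)/aₙ ≤ -x)`.
On the event of `uₙ`, either `log Wₙ < aₙ ε`, and then the event of `pₙ` occurs, or
`Wₙ ≥ e^{aₙ ε}`, which by Markov's inequality has probability at most `e^{-aₙ ε}`; so
`pₙ ≥ uₙ - e^{-aₙ ε}`. Since `uₙ = exp(-(aₙ²/n)((x+ε)²/(2σ²) + o(1)))` and `aₙ²/n = o(aₙ)`,
the Markov term is negligible and `liminf (n/aₙ²) log pₙ ≥ -(x+ε)²/(2σ²)`; let `ε → 0`.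
-/

section LogRate

variable {ι : Type*} {l : Filter ι} {b c u : ι → ℝ} {L : ℝ}

lemma eventually_pos_of_tendsto_mul_log (hL : L < 0) (hu : ∀ i, 0 ≤ u i)
    (hlim : Tendsto (fun i => c i * Real.log (u i)) l (𝓝 L)) : ∀ᶠ i in l, 0 < u i := by
  filter_upwards [hlim.eventually_lt_const hL] with i hi
  refine (hu i).lt_of_ne fun h => ?_
  simp [← h] at hi

lemma tendsto_add_log_atTop (hc : Tendsto c l (𝓝[>] 0))
    (hcb : Tendsto (fun i => c i * b i) l atTop)
    (hlim : Tendsto (fun i => c i * Real.log (u i)) l (𝓝 L)) :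
    Tendsto (fun i => b i + Real.log (u i)) l atTop := by
  refine (hc.inv_tendsto_nhdsGT_zero.atTop_mul_atTop₀ (hcb.atTop_add hlim)).congr' ?_
  filter_upwards [(tendsto_nhdsWithin_iff.mp hc).2] with i (hi : 0 < c i)
  simp only [Pi.inv_apply]
  field_simp

/-- `e^{-b}/u → 0` since `c (b + log u) → ∞`, so `log p ≥ log u + log (1 - e^{-b}/u)`
is `log u + o(1)`. -/
lemma le_liminf_mul_log_of_sub_le [l.NeBot] {v p : ι → ℝ} (hc : Tendsto c l (𝓝[>] 0))
    (hcb : Tendsto (fun i => c i * b i) l atTop) (hu : ∀ᶠ i in l, 0 < u i)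
    (hlim : Tendsto (fun i => c i * Real.log (u i)) l (𝓝 L))
    (hv : ∀ i, v i ≤ Real.exp (-b i)) (hp : ∀ i, u i - v i ≤ p i) :
    (L : EReal) ≤ liminf (fun i => ((c i * Real.log (p i) : ℝ) : EReal)) l := by
  set e : ι → ℝ := fun i => Real.exp (-(b i + Real.log (u i)))
  have he : Tendsto e l (𝓝 0) :=
    Real.tendsto_exp_atBot.comp (tendsto_neg_atTop_atBot.comp (tendsto_add_log_atTop hc hcb hlim))
  have hlog_one_sub : Tendsto (fun i => c i * Real.log (1 - e i)) l (𝓝 0) := by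
    simpa using (tendsto_nhds_of_tendsto_nhdsWithin hc).mul
      ((tendsto_const_nhds.sub he).log (by norm_num : (1 : ℝ) - 0 ≠ 0))
  have hlower : Tendsto (fun i => c i * Real.log (u i) + c i * Real.log (1 - e i)) l (𝓝 L) := by
    simpa using hlim.add hlog_one_sub
  have hle : ∀ᶠ i in l,
      c i * Real.log (u i) + c i * Real.log (1 - e i) ≤ c i * Real.log (p i) := by
    filter_upwards [hu, he.eventually_lt_const one_pos, (tendsto_nhdsWithin_iff.mp hc).2]
      with i hui hei (hci : 0 < c i)
    have hve : v i ≤ u i * e i := by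
      simp only [e]
      rw [neg_add, Real.exp_add, Real.exp_neg (Real.log _), Real.exp_log hui, mul_comm,
        inv_mul_cancel_right₀ hui.ne']
      exact hv i
    have hup : u i * (1 - e i) ≤ p i := by
      rw [mul_one_sub]
      linarith [hp i]
    rw [← mul_add, ← Real.log_mul hui.ne' (sub_pos.mpr hei).ne']
    gcongr
  calc (L : EReal)
      = liminf (fun i => ((c i * Real.log (u i) + c i * Real.log (1 - e i) : ℝ) : EReal)) l :=
        ((continuous_coe_real_ereal.tendsto _).comp hlower).liminf_eq.symm
    _ ≤ _ := liminf_le_liminf (hle.mono fun _ h => EReal.coe_le_coe_iff.mpr h)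

end LogRate

lemma measureReal_le_le_inv_of_integral_le_one {Ω : Type*} [MeasurableSpace Ω] {P : Measure Ω}
    {W : Ω → ℝ} (hW : 0 ≤ᵐ[P] W) (hint : Integrable W P) (hmean : ∫ ω, W ω ∂P ≤ 1) {t : ℝ}
    (ht : 0 < t) : P.real {ω | t ≤ W ω} ≤ t⁻¹ := by
  rw [← one_div, le_div_iff₀' ht]
  exact (mul_meas_ge_le_integral_of_nonneg hW hint t).trans hmean

lemma measureReal_sub_le_of_ae_imp_or {Ω : Type*} [MeasurableSpace Ω] {P : Measure Ω}
    [IsFiniteMeasure P] {s t r : Set Ω} (h : ∀ᵐ ω ∂P, ω ∈ s → ω ∈ t ∨ ω ∈ r) :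
    P.real s - P.real r ≤ P.real t := by
  have hs : P.real s ≤ P.real (t ∪ r) :=
    ENNReal.toReal_mono (measure_ne_top _ _) (measure_mono_ae h)
  linarith [measureReal_union_le (μ := P) t r]

lemma div_le_or_exp_le_of_div_le {a w y c x ε : ℝ} (ha : 0 < a) (hw : 0 < w)
    (h : (y - c) / a ≤ -x - ε) : (y + Real.log w - c) / a ≤ -x ∨ Real.exp (a * ε) ≤ w := by
  refine (lt_or_ge w (Real.exp (a * ε))).imp (fun hlt => ?_) id
  have hlog : Real.log w / a < ε := by
    rw [div_lt_iff₀ ha, mul_comm]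
    exact (Real.log_lt_iff_lt_exp hw).mpr hlt
  rw [add_sub_right_comm, add_div]
  linarith

lemma tendsto_nat_div_sq_nhdsGT_zero {a : ℕ → ℝ} (hapos : ∀ n, 0 < a n)
    (ha : Tendsto (fun n => a n / Real.sqrt n) atTop atTop) :
    Tendsto (fun n : ℕ => n / a n ^ 2) atTop (𝓝[>] 0) := by
  refine tendsto_nhdsWithin_iff.mpr ⟨?_, ?_⟩
  · convert (ha.inv_tendsto_atTop.pow 2) using 1
    · ext n
      simp only [Pi.inv_apply, inv_div, div_pow, Real.sq_sqrt (Nat.cast_nonneg n)]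
    · simp
  · filter_upwards [eventually_gt_atTop 0] with n hn
    exact div_pos (Nat.cast_pos.mpr hn) (pow_pos (hapos n) 2)

lemma tendsto_nat_div_sq_mul_atTop {a : ℕ → ℝ} (hapos : ∀ n, 0 < a n)
    (ha : Tendsto (fun n => a n / n) atTop (𝓝 0)) {ε : ℝ} (hε : 0 < ε) :
    Tendsto (fun n : ℕ => n / a n ^ 2 * (a n * ε)) atTop atTop := by
  have ha' : Tendsto (fun n => a n / n) atTop (𝓝[>] 0) := by
    refine tendsto_nhdsWithin_iff.mpr ⟨ha, ?_⟩
    filter_upwards [eventually_gt_atTop 0] with n hn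
    exact div_pos (hapos n) (Nat.cast_pos.mpr hn)
  convert ha'.inv_tendsto_nhdsGT_zero.const_mul_atTop hε using 2 with n
  have := (hapos n).ne'
  simp only [Pi.inv_apply, inv_div]
  field_simp

theorem stmt_15_general {Ω : Type*} [MeasurableSpace Ω] (P : Measure Ω) [IsProbabilityMeasure P]
    (X W : ℕ → Ω → ℝ)
    (a : ℕ → ℝ) (hapos : ∀ n, 0 < a n)
    (ha1 : Tendsto (fun n => a n / n) atTop (𝓝 0))
    (ha2 : Tendsto (fun n => a n / Real.sqrt n) atTop atTop)
    (σ mu : ℝ) (hσ : 0 < σ)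
    (hX : ∀ x : ℝ, 0 < x → ∀ ε : ℝ, 0 < ε →
      Tendsto (fun n => (n / (a n) ^ 2) *
          Real.log (P {ω | (X n ω - n * mu) / a n ≤ -x - ε}).toReal)
        atTop (𝓝 (-(x + ε) ^ 2 / (2 * σ ^ 2))))
    (hWpos : ∀ n, ∀ᵐ ω ∂P, 0 < W n ω)
    (hWint : ∀ n, Integrable (W n) P) (hWmean : ∀ n, ∫ ω, W n ω ∂P ≤ 1) :
    ∀ x : ℝ, 0 < x →
      (-(x ^ 2 / (2 * σ ^ 2)) : EReal) ≤
        liminf (fun n => ((n / (a n) ^ 2) *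
          Real.log (P {ω | (X n ω + Real.log (W n ω) - n * mu) / a n ≤ -x}).toReal
            : EReal)) atTop := by
  intro x hx
  have hcont : Tendsto (fun ε : ℝ => ((-(x + ε) ^ 2 / (2 * σ ^ 2) : ℝ) : EReal)) (𝓝[>] 0)
      (𝓝 ((-(x + 0) ^ 2 / (2 * σ ^ 2) : ℝ) : EReal)) :=
    ((continuous_coe_real_ereal.comp (by fun_prop)).tendsto 0).mono_left nhdsWithin_le_nhds
  have hlim : ((-(x + 0) ^ 2 / (2 * σ ^ 2) : ℝ) : EReal) = -(x ^ 2 / (2 * σ ^ 2)) := by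
    rw [add_zero, neg_div]
    norm_cast
  rw [← hlim]
  refine le_of_tendsto hcont (eventually_nhdsWithin_of_forall fun ε (hε : 0 < ε) => ?_)
  have hL : -(x + ε) ^ 2 / (2 * σ ^ 2) < 0 := div_neg_of_neg_of_pos (by nlinarith) (by positivity)
  have hu := hX x hx ε hε
  refine le_liminf_mul_log_of_sub_le (tendsto_nat_div_sq_nhdsGT_zero hapos ha2)
    (tendsto_nat_div_sq_mul_atTop hapos ha1 hε)
    (eventually_pos_of_tendsto_mul_log hL (fun _ => ENNReal.toReal_nonneg) hu) hu
    (v := fun n => P.real {ω | Real.exp (a n * ε) ≤ W n ω}) (fun n => ?_) (fun n => ?_)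
  · rw [Real.exp_neg]
    exact measureReal_le_le_inv_of_integral_le_one ((hWpos n).mono fun _ h => h.le) (hWint n)
      (hWmean n) (Real.exp_pos _)
  · exact measureReal_sub_le_of_ae_imp_or
      ((hWpos n).mono fun _ hw hB => div_le_or_exp_le_of_div_le (hapos n) hw hB)

/-- Moderate deviation lower-bound transfer: if
`(n/aₙ²) log P((Xₙ - nμ)/aₙ ≤ -x-ε) → -(x+ε)²/(2σ²)` for all `x, ε > 0`, and `(Wₙ)` are
positive random variables with `sup_n E[Wₙ] ≤ 1`, then for all `x > 0`,
`liminf (n/aₙ²) log P((Xₙ + log Wₙ - nμ)/aₙ ≤ -x) ≥ -x²/(2σ²)`. -/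
theorem stmt_15 {Ω : Type*} [MeasurableSpace Ω] (P : Measure Ω) [IsProbabilityMeasure P]
    (X W : ℕ → Ω → ℝ) (hXmeas : ∀ n, Measurable (X n)) (hWmeas : ∀ n, Measurable (W n))
    (a : ℕ → ℝ) (hapos : ∀ n, 0 < a n)
    (ha1 : Tendsto (fun n => a n / n) atTop (𝓝 0))
    (ha2 : Tendsto (fun n => a n / Real.sqrt n) atTop atTop)
    (σ mu : ℝ) (hσ : 0 < σ)
    (hX : ∀ x : ℝ, 0 < x → ∀ ε : ℝ, 0 < ε →
      Tendsto (fun n => (n / (a n) ^ 2) *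
          Real.log (P {ω | (X n ω - n * mu) / a n ≤ -x - ε}).toReal)
        atTop (𝓝 (-(x + ε) ^ 2 / (2 * σ ^ 2))))
    (hWpos : ∀ n, ∀ᵐ ω ∂P, 0 < W n ω)
    (hWint : ∀ n, Integrable (W n) P) (hWmean : ∀ n, ∫ ω, W n ω ∂P ≤ 1) :
    ∀ x : ℝ, 0 < x →
      (-(x ^ 2 / (2 * σ ^ 2)) : EReal) ≤
        liminf (fun n => ((n / (a n) ^ 2) *
          Real.log (P {ω | (X n ω + Real.log (W n ω) - n * mu) / a n ≤ -x}).toReal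
            : EReal)) atTop :=
  stmt_15_general P X W a hapos ha1 ha2 σ mu hσ hX hWpos hWint hWmean
end

section
/- Let (Xₙ) and (Yₙ) be real random variables such that (Xₙ - nμ)/(√n σ) converges in distribution to a standard normal and Yₙ/√n → 0 in probability. Then (Xₙ + Yₙ - nμ)/(√n σ) also converges in distribution to a standard normal; in particular, for a supercritical branching process in an i.i.d. random environment with σ² = var(log m₀) ∈ (0,∞) and W > 0 a.s., P((log Zₙ - n E[log m₀])/(√n σ) ≤ x) → Φ(x) for all x ∈ ℝ. -/
/-! Slutsky's argument: off the event `{ε ≤ |Vᵢ - Uᵢ|}`, whose probability tends to zero,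
`{Vᵢ ≤ x}` lies between `{Uᵢ ≤ x - ε}` and `{Uᵢ ≤ x + ε}`, so the distribution functions of `Vᵢ`
at `x` are eventually squeezed between values close to `F (x - ε)` and `F (x + ε)`; continuity of
the limit `F` at `x` lets `ε → 0`. For the theorem, `Uₙ` and `Vₙ` are the normalisations of `Xₙ`
and `Xₙ + Yₙ`, whose difference is `Yₙ / (√n σ)`, and the normal distribution function is
continuous. -/

open MeasureTheory Filter Topology Set

lemma ContinuousAt.exists_pos_sub_add_mem {F : ℝ → ℝ} {x : ℝ} {s : Set ℝ}
    (hF : ContinuousAt F x) (hs : s ∈ 𝓝 (F x)) : ∃ ε > 0, F (x - ε) ∈ s ∧ F (x + ε) ∈ s := by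
  obtain ⟨δ, hδ, h⟩ := Metric.eventually_nhds_iff.1 (hF.preimage_mem_nhds hs)
  refine ⟨δ / 2, half_pos hδ, h ?_, h ?_⟩ <;> simp [abs_of_pos hδ, hδ]

lemma continuousAt_integral_Iic {f : ℝ → ℝ} (hf : Integrable f) (x : ℝ) :
    ContinuousAt (fun y => ∫ u in Iic y, f u) x :=
  hf.integrableOn.continuousOn_Iic_primitive_Iic.continuousAt (Iic_mem_nhds (lt_add_one x))

lemma integrable_exp_neg_sq_div_two : Integrable fun u : ℝ => Real.exp (-u ^ 2 / 2) := by
  simpa [neg_div, div_eq_inv_mul] using integrable_exp_neg_mul_sq (b := 1 / 2) (by norm_num)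

lemma setOf_le_subset_union_abs_sub {Ω : Type*} {U V : Ω → ℝ} (x ε : ℝ) :
    {ω | V ω ≤ x} ⊆ {ω | U ω ≤ x + ε} ∪ {ω | ε ≤ |V ω - U ω|} := by
  intro ω (hω : V ω ≤ x)
  refine or_iff_not_imp_right.2 fun (h : ¬ε ≤ |V ω - U ω|) => ?_
  obtain ⟨h₁, -⟩ := abs_lt.1 (not_le.1 h)
  exact (by linarith : U ω ≤ x + ε)

lemma setOf_le_sub_subset_union_abs_sub {Ω : Type*} {U V : Ω → ℝ} (x ε : ℝ) :
    {ω | U ω ≤ x - ε} ⊆ {ω | V ω ≤ x} ∪ {ω | ε ≤ |V ω - U ω|} := by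
  intro ω (hω : U ω ≤ x - ε)
  refine or_iff_not_imp_right.2 fun (h : ¬ε ≤ |V ω - U ω|) => ?_
  obtain ⟨-, h₂⟩ := abs_lt.1 (not_le.1 h)
  exact (by linarith : V ω ≤ x)

section Slutsky

variable {Ω ι : Type*} [MeasurableSpace Ω] {P : Measure Ω} [IsFiniteMeasure P]

lemma toReal_measure_le_add_of_subset_union {A B C : Set Ω} (h : A ⊆ B ∪ C) :
    (P A).toReal ≤ (P B).toReal + (P C).toReal :=
  (measureReal_mono h).trans (measureReal_union_le B C)

theorem tendsto_toReal_measure_le_of_tendsto_abs_sub {l : Filter ι} {U V : ι → Ω → ℝ}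
    {F : ℝ → ℝ} {x : ℝ} (hF : ContinuousAt F x)
    (hU : ∀ y, Tendsto (fun i => (P {ω | U i ω ≤ y}).toReal) l (𝓝 (F y)))
    (hUV : ∀ ε > 0, Tendsto (fun i => (P {ω | ε ≤ |V i ω - U i ω|}).toReal) l (𝓝 0)) :
    Tendsto (fun i => (P {ω | V i ω ≤ x}).toReal) l (𝓝 (F x)) := by
  refine tendsto_order.2 ⟨fun a ha => ?_, fun b hb => ?_⟩
  · obtain ⟨ε, hε, hFε : a < F (x - ε), -⟩ := hF.exists_pos_sub_add_mem (Ioi_mem_nhds ha)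
    have hlim := (hU (x - ε)).sub (hUV ε hε)
    rw [sub_zero] at hlim
    filter_upwards [hlim.eventually (lt_mem_nhds hFε)] with i hi
    have := toReal_measure_le_add_of_subset_union (P := P)
      (setOf_le_sub_subset_union_abs_sub (U := U i) (V := V i) x ε)
    linarith
  · obtain ⟨ε, hε, -, hFε : F (x + ε) < b⟩ := hF.exists_pos_sub_add_mem (Iio_mem_nhds hb)
    have hlim := (hU (x + ε)).add (hUV ε hε)
    rw [add_zero] at hlim
    filter_upwards [hlim.eventually (gt_mem_nhds hFε)] with i hi
    have := toReal_measure_le_add_of_subset_union (P := P)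
      (setOf_le_subset_union_abs_sub (U := U i) (V := V i) x ε)
    linarith

end Slutsky

theorem stmt_17_general {Ω : Type*} [MeasurableSpace Ω] (P : Measure Ω) [IsProbabilityMeasure P]
    (X Y : ℕ → Ω → ℝ)
    (σ mu : ℝ) (hσ : 0 < σ)
    (Φ : ℝ → ℝ)
    (hΦ : ∀ x : ℝ, Φ x = (Real.sqrt (2 * Real.pi))⁻¹ * ∫ u in Set.Iic x, Real.exp (-u ^ 2 / 2))
    (hX : ∀ x : ℝ,
      Tendsto (fun n => (P {ω | (X n ω - n * mu) / (Real.sqrt n * σ) ≤ x}).toReal)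
        atTop (𝓝 (Φ x)))
    (hY : ∀ ε : ℝ, 0 < ε →
      Tendsto (fun n => (P {ω | ε ≤ |Y n ω| / Real.sqrt n}).toReal) atTop (𝓝 0)) :
    ∀ x : ℝ,
      Tendsto (fun n => (P {ω | (X n ω + Y n ω - n * mu) / (Real.sqrt n * σ) ≤ x}).toReal)
        atTop (𝓝 (Φ x)) := by
  intro x
  have hΦx : ContinuousAt Φ x := by
    rw [funext hΦ]
    exact continuousAt_const.mul (continuousAt_integral_Iic integrable_exp_neg_sq_div_two x)
  refine tendsto_toReal_measure_le_of_tendsto_abs_sub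
    (V := fun n ω => (X n ω + Y n ω - n * mu) / (Real.sqrt n * σ)) hΦx hX fun ε hε => ?_
  have hsets : ∀ n : ℕ, {ω | ε ≤ |(X n ω + Y n ω - n * mu) / (Real.sqrt n * σ)
      - (X n ω - n * mu) / (Real.sqrt n * σ)|} = {ω | ε * σ ≤ |Y n ω| / Real.sqrt n} := by
    intro n
    ext ω
    have hdiff : X n ω + Y n ω - n * mu - (X n ω - n * mu) = Y n ω := by ring
    rw [mem_ofPred_eq, mem_ofPred_eq, ← sub_div, hdiff, abs_div, abs_mul,
      abs_of_nonneg (Real.sqrt_nonneg _), abs_of_pos hσ, ← div_div, le_div_iff₀ hσ]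
  simpa only [hsets] using hY (ε * σ) (mul_pos hε hσ)

/-- Central limit theorem transfer: if `(Xₙ - nμ)/(√n σ)` converges in distribution to a
standard normal (expressed via pointwise convergence of distribution functions to `Φ`) and
`Yₙ/√n → 0` in probability, then `(Xₙ + Yₙ - nμ)/(√n σ)` also converges in distribution to
a standard normal; in particular, for `log Zₙ = log Πₙ + log Wₙ` this gives
`P((log Zₙ - n E log m₀)/(√n σ) ≤ x) → Φ(x)` for all `x`. -/
theorem stmt_17 {Ω : Type*} [MeasurableSpace Ω] (P : Measure Ω) [IsProbabilityMeasure P]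
    (X Y : ℕ → Ω → ℝ) (hXmeas : ∀ n, Measurable (X n)) (hYmeas : ∀ n, Measurable (Y n))
    (σ mu : ℝ) (hσ : 0 < σ)
    (Φ : ℝ → ℝ)
    (hΦ : ∀ x : ℝ, Φ x = (Real.sqrt (2 * Real.pi))⁻¹ * ∫ u in Set.Iic x, Real.exp (-u ^ 2 / 2))
    (hX : ∀ x : ℝ,
      Tendsto (fun n => (P {ω | (X n ω - n * mu) / (Real.sqrt n * σ) ≤ x}).toReal)
        atTop (𝓝 (Φ x)))
    (hY : ∀ ε : ℝ, 0 < ε →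
      Tendsto (fun n => (P {ω | ε ≤ |Y n ω| / Real.sqrt n}).toReal) atTop (𝓝 0)) :
    ∀ x : ℝ,
      Tendsto (fun n => (P {ω | (X n ω + Y n ω - n * mu) / (Real.sqrt n * σ) ≤ x}).toReal)
        atTop (𝓝 (Φ x)) :=
  stmt_17_general P X Y σ mu hσ Φ hΦ hX hY
end
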